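/- arXiv:2506.23747 — 2 statements merged into one kernel-verified Lean document; each statement's English description precedes it below -/
import Mathlib

section
/- Let I be an admissible ideal of kQ, α an arrow of Q, and fix an admissible order on the set of paths of Q. Then I possesses a strict α-monomial Gröbner basis if and only if the reduced Gröbner basis of I is strict α-monomial. In particular, if 𝒢_{p,q} and 𝒢'_{p',q'} are two strict α-monomial Gröbner bases for I, then p' = p and q' = q. -/
/-! Scaffolding: path algebras of quivers, admissible ideals, monomial arrow removal,
admissible orders and Gröbner bases, following Green. -/

open Quiver

/-- The type of all paths in a quiver `V` (with arbitrary source and target). -/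
abbrev PathsIn (V : Type) [Quiver.{0} V] : Type := Σ a b : V, Quiver.Path a b

namespace PathsIn

variable {V : Type} [Quiver.{0} V]

/-- The length of a path. -/
def len (u : PathsIn V) : ℕ := u.2.2.length

/-- `u.Divides w` : the path `u` is a subpath of (divides) the path `w`,
i.e. `w = r·u·s` for (possibly trivial) paths `r`, `s`. -/
def Divides (u w : PathsIn V) : Prop :=
  ∃ (a d : V) (r : Quiver.Path a u.1) (s : Quiver.Path u.2.1 d),
    w = ⟨a, d, (r.comp u.2.2).comp s⟩

/-- `u.ProperlyDivides w` : `u` is a proper subpath of `w`. -/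
def ProperlyDivides (u w : PathsIn V) : Prop := u.Divides w ∧ u ≠ w

/-- `s.OverlapsLeftWith t` : the path `s` overlaps with the path `t` from the left,
i.e. `t = r₁·r₂` and `s = r₂·r₃` for paths `r₁, r₂, r₃` with `r₂` non-trivial.
(Equivalently, `t` overlaps with `s` from the right.) -/
def OverlapsLeftWith (s t : PathsIn V) : Prop :=
  ∃ (x : V) (r₁ : Quiver.Path t.1 x) (r₂ : Quiver.Path x t.2.1)
    (r₃ : Quiver.Path t.2.1 s.2.1),
      0 < r₂.length ∧ t = ⟨t.1, t.2.1, r₁.comp r₂⟩ ∧ s = ⟨x, s.2.1, r₂.comp r₃⟩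

end PathsIn

/-- The path of length one corresponding to an arrow. -/
def arrowPath {V : Type} [Quiver.{0} V] {a b : V} (α : a ⟶ b) : PathsIn V :=
  ⟨a, b, α.toPath⟩

/-- A path `w` avoids the arrow `α` if `α` is not a subpath of `w`. -/
def AvoidsArrow {V : Type} [Quiver.{0} V] {a b : V} (α : a ⟶ b) (w : PathsIn V) : Prop :=
  ¬ (arrowPath α).Divides w

/-- `IsPathAlgebra k V A` : the `k`-algebra `A` is the path algebra `kQ` of the quiver `V`:
it has a `k`-basis indexed by the paths of `V`, multiplication of basis elements is given by
concatenation of composable paths (and is zero on non-composable ones), and the identity is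
the sum of the trivial paths. -/
structure IsPathAlgebra (k : Type) [Field k] (V : Type) [Quiver.{0} V] [Fintype V]
    (A : Type) [Ring A] [Algebra k A] : Type where
  basis : Module.Basis (PathsIn V) k A
  mul_matched : ∀ {a b c : V} (p : Quiver.Path a b) (q : Quiver.Path b c),
    basis ⟨a, b, p⟩ * basis ⟨b, c, q⟩ = basis ⟨a, c, p.comp q⟩
  mul_unmatched : ∀ {a b b' c : V} (p : Quiver.Path a b) (q : Quiver.Path b' c),
    b ≠ b' → basis ⟨a, b, p⟩ * basis ⟨b', c, q⟩ = 0
  one_def : (1 : A) = ∑ a : V, basis ⟨a, a, Quiver.Path.nil⟩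

namespace IsPathAlgebra

variable {k : Type} [Field k] {V : Type} [Quiver.{0} V] [Fintype V]
  {A : Type} [Ring A] [Algebra k A]

/-- The path `u` occurs in the element `z` of the path algebra (i.e. `u` has a non-zero
coefficient in `z`). -/
def OccursIn (PA : IsPathAlgebra k V A) (u : PathsIn V) (z : A) : Prop :=
  PA.basis.repr z u ≠ 0

/-- The path `u` occurs in the subset `T` of the path algebra. -/
def OccursInSet (PA : IsPathAlgebra k V A) (u : PathsIn V) (T : Set A) : Prop :=
  ∃ z ∈ T, PA.OccursIn u z

/-- An element of the path algebra avoids the arrow `α` if every path occurring in it does. -/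
def ElemAvoids (PA : IsPathAlgebra k V A) {a b : V} (α : a ⟶ b) (z : A) : Prop :=
  ∀ u : PathsIn V, PA.OccursIn u z → AvoidsArrow α u

/-- A relation: a linear combination of paths of length at least two having a common source
and a common target. -/
def IsRelation (PA : IsPathAlgebra k V A) (z : A) : Prop :=
  (∀ u : PathsIn V, PA.OccursIn u z → 2 ≤ u.len) ∧
  (∀ u v : PathsIn V, PA.OccursIn u z → PA.OccursIn v z → u.1 = v.1 ∧ u.2.1 = v.2.1)

end IsPathAlgebra

/-- The two-sided ideal of a ring generated by a subset, as a set: the additive closure of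
the set of elements `r * t * s` with `t` in the generating set. -/
def ringIdealSpan {A : Type} [Ring A] (T : Set A) : Set A :=
  (AddSubgroup.closure {y : A | ∃ r s : A, ∃ t ∈ T, y = r * t * s} : AddSubgroup A)

/-- An admissible ideal of the path algebra: a two-sided ideal `I` with `J^n ⊆ I ⊆ J²`
for some `n`, where `J` is the arrow ideal. -/
def IsAdmissibleIdeal {k : Type} [Field k] {V : Type} [Quiver.{0} V] [Fintype V]
    {A : Type} [Ring A] [Algebra k A] (PA : IsPathAlgebra k V A) (I : Set A) : Prop :=
  I = ringIdealSpan I ∧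
  (∃ n : ℕ, ∀ u : PathsIn V, n ≤ u.len → PA.basis u ∈ I) ∧
  (∀ z ∈ I, ∀ u : PathsIn V, PA.OccursIn u z → 2 ≤ u.len)

/-- A presentation of the quotient of an algebra `A` by (the set underlying) a two-sided
ideal `I`: a surjective algebra homomorphism with kernel `I`. -/
structure QuotPresentation (k : Type) [Field k] {A : Type} [Ring A] [Algebra k A]
    (I : Set A) (B : Type) [Ring B] [Algebra k B] : Type where
  proj : A →ₐ[k] B
  surj : Function.Surjective proj
  ker : ∀ z : A, proj z = 0 ↔ z ∈ I

section StrictMonomial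

variable {k : Type} [Field k] {V : Type} [Quiver.{0} V] [Fintype V]
  {A : Type} [Ring A] [Algebra k A]

/-- The path `pαq`. -/
def pathPAQ {V : Type} [Quiver.{0} V] {va vb xp yq : V} (α : va ⟶ vb)
    (p : Quiver.Path xp va) (q : Quiver.Path vb yq) : PathsIn V :=
  ⟨xp, yq, (p.comp α.toPath).comp q⟩

/-- Properties (P) for a subset `T` of the path algebra, relative to the arrow `α` and the
paths `p`, `q`:  (P1) every element of `T` other than `pαq` avoids `α`;
(P2) `p` does not overlap from the left with any path occurring in `T`;
(P2ᵒᵖ) `q` does not overlap from the right with any path occurring in `T`;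
(P3) no path occurring in `T` divides `p` or `q`. -/
structure SatisfiesP (PA : IsPathAlgebra k V A) {va vb xp yq : V} (α : va ⟶ vb)
    (T : Set A) (p : Quiver.Path xp va) (q : Quiver.Path vb yq) : Prop where
  p1 : ∀ z ∈ T, z ≠ PA.basis (pathPAQ α p q) → PA.ElemAvoids α z
  p2 : ∀ u : PathsIn V, PA.OccursInSet u T →
    ¬ PathsIn.OverlapsLeftWith ⟨xp, va, p⟩ u
  p2op : ∀ u : PathsIn V, PA.OccursInSet u T →
    ¬ PathsIn.OverlapsLeftWith u ⟨vb, yq, q⟩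
  p3 : ∀ u : PathsIn V, PA.OccursInSet u T →
    ¬ u.Divides ⟨xp, va, p⟩ ∧ ¬ u.Divides ⟨vb, yq, q⟩

/-- The common context for (strict) `α`-monomial generating sets: `p`, `q` avoid `α`,
at most one of them is trivial, and `T` is a finite generating set of relations for `I`. -/
structure IsMonGenData (PA : IsPathAlgebra k V A) {va vb xp yq : V} (α : va ⟶ vb)
    (I : Set A) (T : Set A) (p : Quiver.Path xp va) (q : Quiver.Path vb yq) : Prop where
  finite : T.Finite
  rels : ∀ t ∈ T, PA.IsRelation t
  gen : I = ringIdealSpan T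
  p_avoids : AvoidsArrow α (⟨xp, va, p⟩ : PathsIn V)
  q_avoids : AvoidsArrow α (⟨vb, yq, q⟩ : PathsIn V)
  not_both_trivial : 0 < p.length ∨ 0 < q.length

/-- `T` is a strict `α`-monomial generating set for the ideal `I`, relative to the paths
`p` and `q`. -/
structure IsStrictMonomialGenSet (PA : IsPathAlgebra k V A) {va vb xp yq : V} (α : va ⟶ vb)
    (I : Set A) (T : Set A) (p : Quiver.Path xp va) (q : Quiver.Path vb yq) : Prop where
  data : IsMonGenData PA α I T p q
  mem : PA.basis (pathPAQ α p q) ∈ T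
  others_avoid : ∀ z ∈ T, z ≠ PA.basis (pathPAQ α p q) → PA.ElemAvoids α z
  no_proper_sub : ∀ u : PathsIn V, u.ProperlyDivides (pathPAQ α p q) → PA.basis u ∉ I
  no_overlap_p : ∀ u : PathsIn V, PA.OccursInSet u T →
    ¬ PathsIn.OverlapsLeftWith ⟨xp, va, p⟩ u
  no_overlap_q : ∀ u : PathsIn V, PA.OccursInSet u T →
    ¬ PathsIn.OverlapsLeftWith u ⟨vb, yq, q⟩
  no_divide : ∀ u : PathsIn V, PA.OccursInSet u T →
    ¬ u.Divides ⟨xp, va, p⟩ ∧ ¬ u.Divides ⟨vb, yq, q⟩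

/-- `T` is an `α`-monomial generating set: every element of `T` which is not (a scalar
multiple of) a path avoids `α`. -/
structure IsMonomialGenSet (PA : IsPathAlgebra k V A) {va vb : V} (α : va ⟶ vb)
    (I : Set A) (T : Set A) : Prop where
  finite : T.Finite
  rels : ∀ t ∈ T, PA.IsRelation t
  gen : I = ringIdealSpan T
  mono : ∀ t ∈ T, (∃ (u : PathsIn V) (c : k), c ≠ 0 ∧ t = c • PA.basis u) ∨ PA.ElemAvoids α t

end StrictMonomial

section Groebner

variable {k : Type} [Field k] {V : Type} [Quiver.{0} V] [Fintype V]
  {A : Type} [Ring A] [Algebra k A]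

/-- An admissible order on the set of paths of a quiver: a well-order compatible with left
and right multiplication, for which every subpath of a path precedes it. -/
structure AdmissibleOrder (V : Type) [Quiver.{0} V] : Type 1 where
  le : PathsIn V → PathsIn V → Prop
  refl : ∀ u, le u u
  trans : ∀ u v w, le u v → le v w → le u w
  antisymm : ∀ u v, le u v → le v u → u = v
  total : ∀ u v, le u v ∨ le v u
  wf : WellFounded (fun u w => le u w ∧ u ≠ w)
  right_compat : ∀ (u w : PathsIn V), le u w → ∀ (hc : u.2.1 = w.2.1) (z : V)
    (r : Quiver.Path w.2.1 z),
      le ⟨u.1, z, u.2.2.comp (r.cast hc.symm rfl)⟩ ⟨w.1, z, w.2.2.comp r⟩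
  left_compat : ∀ (u w : PathsIn V), le u w → ∀ (hc : u.1 = w.1) (z : V)
    (r : Quiver.Path z w.1),
      le ⟨z, u.2.1, (r.cast rfl hc.symm).comp u.2.2⟩ ⟨z, w.2.1, r.comp w.2.2⟩
  subpath_le : ∀ u w, PathsIn.Divides u w → le u w

/-- `IsTip PA O z u` : the path `u` is the `O`-largest path occurring in `z`. -/
def IsTip (PA : IsPathAlgebra k V A) (O : AdmissibleOrder V) (z : A) (u : PathsIn V) : Prop :=
  PA.OccursIn u z ∧ ∀ w : PathsIn V, PA.OccursIn w z → O.le w u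

/-- `G` is a Gröbner basis for the ideal `I` with respect to the admissible order `O`:
`G ⊆ I` and the tip of every non-zero element of `I` is divisible by the tip of some
element of `G`. -/
def IsGroebnerBasis (PA : IsPathAlgebra k V A) (O : AdmissibleOrder V)
    (I : Set A) (G : Set A) : Prop :=
  G ⊆ I ∧ ∀ z ∈ I, z ≠ 0 → ∃ g ∈ G, ∃ tg tz : PathsIn V,
    IsTip PA O g tg ∧ IsTip PA O z tz ∧ tg.Divides tz

/-- A strict `α`-monomial Gröbner basis for `I`, relative to the paths `p`, `q` (which
avoid `α`, have the appropriate endpoints, and at most one of which is trivial):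
`pαq ∈ 𝒢`, every other element of `𝒢` avoids `α`, and no tip of an element of `𝒢`
overlaps with `p` from the right, overlaps with `q` from the left, or divides `p` or `q`. -/
structure IsStrictMonomialGB (PA : IsPathAlgebra k V A) (O : AdmissibleOrder V)
    {va vb xp yq : V} (α : va ⟶ vb) (I : Set A) (G : Set A)
    (p : Quiver.Path xp va) (q : Quiver.Path vb yq) : Prop where
  gb : IsGroebnerBasis PA O I G
  p_avoids : AvoidsArrow α (⟨xp, va, p⟩ : PathsIn V)
  q_avoids : AvoidsArrow α (⟨vb, yq, q⟩ : PathsIn V)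
  not_both_trivial : 0 < p.length ∨ 0 < q.length
  mem : PA.basis (pathPAQ α p q) ∈ G
  others_avoid : ∀ z ∈ G, z ≠ PA.basis (pathPAQ α p q) → PA.ElemAvoids α z
  tips_no_overlap_p : ∀ g ∈ G, ∀ u : PathsIn V, IsTip PA O g u →
    ¬ PathsIn.OverlapsLeftWith ⟨xp, va, p⟩ u
  tips_no_overlap_q : ∀ g ∈ G, ∀ u : PathsIn V, IsTip PA O g u →
    ¬ PathsIn.OverlapsLeftWith u ⟨vb, yq, q⟩
  tips_no_divide : ∀ g ∈ G, ∀ u : PathsIn V, IsTip PA O g u →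
    ¬ u.Divides ⟨xp, va, p⟩ ∧ ¬ u.Divides ⟨vb, yq, q⟩

end Groebner

section Reduced

variable {k : Type} [Field k] {V : Type} [Quiver.{0} V] [Fintype V]
  {A : Type} [Ring A] [Algebra k A]

/-- `tip(I)`: the set of paths occurring as the tip of a (non-zero) element of `I`. -/
def tipSet (PA : IsPathAlgebra k V A) (O : AdmissibleOrder V) (I : Set A) :
    Set (PathsIn V) :=
  {u | ∃ z ∈ I, IsTip PA O z u}

/-- `n` is the normal form `N(z)` of `z` modulo `I`: `n` is a linear combination of paths
in `ntip(I)` and `z - n ∈ I`. -/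
def IsNormalForm (PA : IsPathAlgebra k V A) (O : AdmissibleOrder V) (I : Set A)
    (z n : A) : Prop :=
  (∀ u : PathsIn V, PA.OccursIn u n → u ∉ tipSet PA O I) ∧ z - n ∈ I

/-- The unique minimal subset `T` of `tip(I)` generating the same (monomial) ideal of `kQ`
as `tip(I)`: the tips none of whose proper subpaths lie in that ideal. -/
def minTips (PA : IsPathAlgebra k V A) (O : AdmissibleOrder V) (I : Set A) :
    Set (PathsIn V) :=
  {u | u ∈ tipSet PA O I ∧ ∀ u' : PathsIn V, u'.ProperlyDivides u →
    PA.basis u' ∉ ringIdealSpan (PA.basis '' tipSet PA O I)}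

/-- The reduced Gröbner basis of `I`: `{t - N(t) : t ∈ T}` where `T = minTips`. -/
def reducedGB (PA : IsPathAlgebra k V A) (O : AdmissibleOrder V) (I : Set A) : Set A :=
  {x | ∃ u ∈ minTips PA O I, ∃ n : A,
    IsNormalForm PA O I (PA.basis u) n ∧ x = PA.basis u - n}

end Reduced

/-! Every tip of `I` is divisible by the tip of an element of `𝒢_{p,q}`, and since no tip of
`𝒢` divides `p` or `q`, the only tip of `I` dividing `pαq` is `pαq` itself.  Hence `pαq` is a
minimal tip of `I`, and in any other strict `α`-monomial Gröbner basis `𝒢'_{p',q'}` it must be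
the tip of the unique element involving `α`, that is `pαq = p'αq'`; as `q` and `q'` avoid `α`
this forces `p = p'` and `q = q'`.  Every other minimal tip `t` is the tip of an element of `𝒢`
avoiding `α`.  Reducing `t` modulo `I` only subtracts multiples `r g s` whose tip `r·tip(g)·s`
avoids `α`, so `g ≠ pαq` and `r`, `g`, `s` all avoid `α`: the normal form of `t` avoids `α`.
So the reduced Gröbner basis `{t - N(t)}` keeps `pαq`, and its tips, being tips of `𝒢`,
inherit the overlap and divisibility conditions. -/

namespace Quiver.Path

variable {V : Type*} [Quiver V]

lemma exists_eq_comp_of_comp_eq_comp :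
    ∀ {a b c d : V} (x : Path a b) (y : Path b d) (r : Path a c) (s : Path c d),
      x.comp y = r.comp s → s.length ≤ y.length →
        ∃ t : Path b c, y = t.comp s ∧ r = x.comp t
  | _, _, _, _, _, y, _, nil, h, _ => ⟨y, y.comp_nil.symm, by simpa using h.symm⟩
  | _, _, _, _, _, nil, _, cons _ _, _, hl => by simp at hl
  | _, _, _, _, x, cons y f, r, cons s e, h, hl => by
    rw [comp_cons, comp_cons] at h
    obtain rfl := obj_eq_of_cons_eq_cons h
    obtain rfl : f = e := eq_of_heq (hom_heq_of_cons_eq_cons h)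
    obtain ⟨t, rfl, rfl⟩ :=
      exists_eq_comp_of_comp_eq_comp x y r s (eq_of_heq (heq_of_cons_eq_cons h))
        (by simpa using hl)
    exact ⟨t, (comp_cons _ _ _).symm, rfl⟩

end Quiver.Path

open Quiver.Path

namespace PathsIn

variable {V : Type} [Quiver.{0} V]

lemma exists_eq_heq_of_mk_eq {a c a' c' : V} {x : Quiver.Path a c} {y : Quiver.Path a' c'}
    (h : (⟨a, c, x⟩ : PathsIn V) = ⟨a', c', y⟩) :
    ∃ (_ : a = a') (_ : c = c'), HEq x y := by
  cases h
  exact ⟨rfl, rfl, HEq.rfl⟩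

lemma Divides.refl (u : PathsIn V) : u.Divides u :=
  ⟨u.1, u.2.1, .nil, .nil, by simp⟩

lemma Divides.trans {u w x : PathsIn V} (h₁ : u.Divides w) (h₂ : w.Divides x) :
    u.Divides x := by
  obtain ⟨a, d, r, s, rfl⟩ := h₁
  obtain ⟨a', d', r', s', rfl⟩ := h₂
  exact ⟨a', d', r'.comp r, s.comp s', by simp [comp_assoc]⟩

lemma divides_comp_left {a b c : V} (x : Quiver.Path a b) (y : Quiver.Path b c) :
    PathsIn.Divides (⟨a, b, x⟩ : PathsIn V) ⟨a, c, x.comp y⟩ :=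
  ⟨a, c, .nil, y, by simp⟩

lemma divides_comp_right {a b c : V} (x : Quiver.Path a b) (y : Quiver.Path b c) :
    PathsIn.Divides (⟨b, c, y⟩ : PathsIn V) ⟨a, c, x.comp y⟩ :=
  ⟨a, c, x, .nil, by simp⟩

lemma Divides.len_le {u w : PathsIn V} (h : u.Divides w) : u.len ≤ w.len := by
  obtain ⟨a, d, r, s, rfl⟩ := h
  simp only [len, length_comp]
  omega

lemma Divides.eq_of_len_le {u w : PathsIn V} (h : u.Divides w) (hl : w.len ≤ u.len) :
    u = w := by
  obtain ⟨a, d, r, s, rfl⟩ := h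
  simp only [len, length_comp] at hl
  obtain rfl := eq_of_length_zero r (by omega)
  obtain rfl := eq_of_length_zero s (by omega)
  obtain rfl := Quiver.Path.eq_nil_of_length_zero r (by omega)
  obtain rfl := Quiver.Path.eq_nil_of_length_zero s (by omega)
  simp

lemma Divides.antisymm {u w : PathsIn V} (h₁ : u.Divides w) (h₂ : w.Divides u) : u = w :=
  h₁.eq_of_len_le h₂.len_le

lemma ProperlyDivides.len_lt {u w : PathsIn V} (h : u.ProperlyDivides w) : u.len < w.len :=
  lt_of_le_of_ne h.1.len_le fun hl => h.2 (h.1.eq_of_len_le hl.ge)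

end PathsIn

section Avoidance

variable {V : Type} [Quiver.{0} V] {va vb : V} {α : va ⟶ vb}

lemma AvoidsArrow.of_divides {u w : PathsIn V} (hw : AvoidsArrow α w) (h : u.Divides w) :
    AvoidsArrow α u :=
  fun hu => hw (hu.trans h)

lemma arrowPath_divides_comp {a b c : V} {x : Quiver.Path a b} {y : Quiver.Path b c}
    (h : (arrowPath α).Divides ⟨a, c, x.comp y⟩) :
    (arrowPath α).Divides ⟨a, b, x⟩ ∨ (arrowPath α).Divides ⟨b, c, y⟩ := by
  dsimp only [PathsIn.Divides, arrowPath] at h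
  obtain ⟨a', d', r, s, hEq⟩ := h
  obtain ⟨rfl, rfl, hp⟩ := PathsIn.exists_eq_heq_of_mk_eq hEq
  have hw : x.comp y = (r.comp α.toPath).comp s := eq_of_heq hp
  rcases le_or_gt y.length s.length with hl | hl
  · obtain ⟨t, -, rfl⟩ := exists_eq_comp_of_comp_eq_comp _ s x y hw.symm hl
    exact Or.inl ⟨a, b, r, t, rfl⟩
  · rw [comp_assoc] at hw
    obtain ⟨t, rfl, -⟩ := exists_eq_comp_of_comp_eq_comp x y r _ hw (by
      have := congrArg length hw
      simp only [length_comp, length_toPath] at this ⊢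
      omega)
    exact Or.inr ⟨b, c, t, s,
      congrArg (fun z => (⟨b, c, z⟩ : PathsIn V)) (comp_assoc _ _ _).symm⟩

lemma avoidsArrow_comp_iff {a b c : V} {x : Quiver.Path a b} {y : Quiver.Path b c} :
    AvoidsArrow α ⟨a, c, x.comp y⟩ ↔
      AvoidsArrow α ⟨a, b, x⟩ ∧ AvoidsArrow α ⟨b, c, y⟩ :=
  ⟨fun h => ⟨h.of_divides (PathsIn.divides_comp_left x y),
      h.of_divides (PathsIn.divides_comp_right x y)⟩,
    fun ⟨hx, hy⟩ h => (arrowPath_divides_comp h).elim hx hy⟩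

end Avoidance

section PathPAQ

variable {V : Type} [Quiver.{0} V] {va vb : V} {α : va ⟶ vb}

lemma arrowPath_divides_pathPAQ {xp yq : V} (p : Quiver.Path xp va) (q : Quiver.Path vb yq) :
    (arrowPath α).Divides (pathPAQ α p q) :=
  ⟨xp, yq, p, q, rfl⟩

lemma divides_pathPAQ {xp yq : V} {p : Quiver.Path xp va} {q : Quiver.Path vb yq}
    {u : PathsIn V} (h : u.Divides (pathPAQ α p q)) :
    (arrowPath α).Divides u ∨ u.Divides ⟨xp, va, p⟩ ∨ u.Divides ⟨vb, yq, q⟩ := by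
  obtain ⟨ua, ub, u⟩ := u
  obtain ⟨a', d', r, s, hEq⟩ := h
  dsimp only at r s
  obtain ⟨rfl, rfl, hp⟩ := PathsIn.exists_eq_heq_of_mk_eq hEq
  have hw : (p.comp α.toPath).comp q = (r.comp u).comp s := eq_of_heq hp
  rcases le_or_gt s.length q.length with hs | hs
  · obtain ⟨t, rfl, ht⟩ := exists_eq_comp_of_comp_eq_comp _ q _ s hw hs
    rcases le_or_gt u.length t.length with hu | hu
    · obtain ⟨t', rfl, -⟩ := exists_eq_comp_of_comp_eq_comp _ t r u ht.symm hu
      exact Or.inr (Or.inr ⟨vb, yq, t', s, rfl⟩)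
    · rw [comp_assoc] at ht
      obtain ⟨t', rfl, -⟩ := exists_eq_comp_of_comp_eq_comp r u p _ ht (by
        simp only [length_comp, length_toPath]
        omega)
      exact Or.inl ⟨ua, ub, t', t,
        congrArg (fun z => (⟨ua, ub, z⟩ : PathsIn V)) (comp_assoc _ _ _).symm⟩
  · rw [comp_assoc] at hw
    obtain ⟨t, -, rfl⟩ := exists_eq_comp_of_comp_eq_comp _ s p _ hw.symm (by
      simp only [length_comp, length_toPath]
      omega)
    exact Or.inr (Or.inl ⟨xp, va, r, t, rfl⟩)

lemma pathPAQ_injective {xp yq xp' yq' : V} {p : Quiver.Path xp va} {q : Quiver.Path vb yq}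
    {p' : Quiver.Path xp' va} {q' : Quiver.Path vb yq'}
    (hq : AvoidsArrow α ⟨vb, yq, q⟩) (hq' : AvoidsArrow α ⟨vb, yq', q'⟩)
    (h : pathPAQ α p q = pathPAQ α p' q') :
    (⟨xp, va, p⟩ : PathsIn V) = ⟨xp', va, p'⟩ ∧
      (⟨vb, yq, q⟩ : PathsIn V) = ⟨vb, yq', q'⟩ := by
  wlog hle : q.length ≤ q'.length generalizing xp yq xp' yq' p q p' q'
  · obtain ⟨h₁, h₂⟩ := this hq' hq h.symm (by omega)
    exact ⟨h₁.symm, h₂.symm⟩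
  obtain ⟨rfl, rfl, hp⟩ := PathsIn.exists_eq_heq_of_mk_eq h
  obtain ⟨t, rfl, ht⟩ := exists_eq_comp_of_comp_eq_comp _ q' _ q (eq_of_heq hp).symm hle
  cases t with
  | nil =>
    simp only [comp_toPath_eq_cons, comp_nil] at ht
    obtain rfl := eq_of_heq (heq_of_cons_eq_cons ht)
    simp
  | cons t e =>
    simp only [comp_toPath_eq_cons, comp_cons] at ht
    obtain rfl := obj_eq_of_cons_eq_cons ht
    obtain rfl : α = e := eq_of_heq (hom_heq_of_cons_eq_cons ht)
    refine absurd ?_ hq'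
    exact ⟨vb, yq, t, q, by simp [arrowPath]⟩

end PathPAQ

lemma AdmissibleOrder.exists_max {V : Type} [Quiver.{0} V] (O : AdmissibleOrder V)
    (s : Finset (PathsIn V)) (hs : s.Nonempty) : ∃ u ∈ s, ∀ v ∈ s, O.le v u := by
  let _ : Preorder (PathsIn V) := { le := O.le, le_refl := O.refl, le_trans := O.trans }
  obtain ⟨u, hu, hmax⟩ := s.exists_maximal hs
  exact ⟨u, hu, fun v hv => (O.total v u).elim id (hmax hv)⟩

lemma AdmissibleOrder.le_comp_comp {V : Type} [Quiver.{0} V] (O : AdmissibleOrder V)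
    {f g : V} {v w : Quiver.Path f g} (h : O.le ⟨f, g, v⟩ ⟨f, g, w⟩) {a d : V}
    (r : Quiver.Path a f) (s : Quiver.Path g d) :
    O.le ⟨a, d, (r.comp v).comp s⟩ ⟨a, d, (r.comp w).comp s⟩ := by
  have h₁ := O.right_compat ⟨f, g, v⟩ ⟨f, g, w⟩ h rfl d s
  have h₂ := O.left_compat ⟨f, d, v.comp s⟩ ⟨f, d, w.comp s⟩ h₁ rfl a r
  simpa only [cast_rfl_rfl, comp_assoc] using h₂

namespace IsPathAlgebra

variable {k : Type} [Field k] {V : Type} [Quiver.{0} V] [Fintype V]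
  {A : Type} [Ring A] [Algebra k A] (PA : IsPathAlgebra k V A)

lemma occursIn_basis {u w : PathsIn V} : PA.OccursIn w (PA.basis u) ↔ w = u := by
  classical
  rw [OccursIn, Module.Basis.repr_self_apply]
  simp [eq_comm]

lemma basis_mul_basis_mul_basis {e f g h : V} (a : Quiver.Path e f) (b : Quiver.Path f g)
    (c : Quiver.Path g h) :
    PA.basis ⟨e, f, a⟩ * PA.basis ⟨f, g, b⟩ * PA.basis ⟨g, h, c⟩ =
      PA.basis ⟨e, h, (a.comp b).comp c⟩ := by
  rw [PA.mul_matched, PA.mul_matched]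

lemma exists_isTip (O : AdmissibleOrder V) {z : A} (hz : z ≠ 0) : ∃ u, IsTip PA O z u := by
  obtain ⟨u, hu, hmax⟩ := O.exists_max (PA.basis.repr z).support
    (Finsupp.support_nonempty_iff.2 (by simpa using hz))
  exact ⟨u, Finsupp.mem_support_iff.1 hu, fun w hw => hmax w (Finsupp.mem_support_iff.2 hw)⟩

variable {PA}

lemma OccursIn.ne_zero {u : PathsIn V} {z : A} (h : PA.OccursIn u z) : z ≠ 0 := by
  rintro rfl
  simp [OccursIn] at h

lemma OccursIn.of_add {u : PathsIn V} {x y : A} (h : PA.OccursIn u (x + y)) :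
    PA.OccursIn u x ∨ PA.OccursIn u y := by
  by_contra! hc
  simp_all [OccursIn]

lemma OccursIn.of_sub {u : PathsIn V} {x y : A} (h : PA.OccursIn u (x - y)) :
    PA.OccursIn u x ∨ PA.OccursIn u y := by
  by_contra! hc
  simp_all [OccursIn]

lemma OccursIn.of_smul {u : PathsIn V} {c : k} {x : A} (h : PA.OccursIn u (c • x)) :
    PA.OccursIn u x := by
  intro hx
  simp_all [OccursIn]

lemma exists_occursIn_of_occursIn_map (f : A →ₗ[k] A) {z : A} {u : PathsIn V}
    (h : PA.OccursIn u (f z)) : ∃ w, PA.OccursIn w z ∧ PA.OccursIn u (f (PA.basis w)) := by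
  rw [OccursIn, ← PA.basis.linearCombination_repr z, Finsupp.linearCombination_apply,
    map_finsuppSum, map_finsuppSum, Finsupp.sum, Finsupp.finsetSum_apply] at h
  obtain ⟨w, hw, hne⟩ := Finset.exists_ne_zero_of_sum_ne_zero h
  refine ⟨w, Finsupp.mem_support_iff.1 hw, fun h0 => hne ?_⟩
  simp [map_smul, h0]

lemma exists_of_occursIn_mul_mul {x y z : A} {u : PathsIn V} (hu : PA.OccursIn u (x * y * z)) :
    ∃ (e f g h : V) (a : Quiver.Path e f) (b : Quiver.Path f g) (c : Quiver.Path g h),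
      PA.OccursIn ⟨e, f, a⟩ x ∧ PA.OccursIn ⟨f, g, b⟩ y ∧
        PA.OccursIn ⟨g, h, c⟩ z ∧ u = ⟨e, h, (a.comp b).comp c⟩ := by
  obtain ⟨⟨e, f, a⟩, ha, hu⟩ := PA.exists_occursIn_of_occursIn_map
    (LinearMap.mulRight k (y * z)) (by simpa [mul_assoc] using hu)
  obtain ⟨⟨g', h, c⟩, hc, hu⟩ := PA.exists_occursIn_of_occursIn_map
    (LinearMap.mulLeft k (PA.basis ⟨e, f, a⟩ * y)) (by simpa [mul_assoc] using hu)
  obtain ⟨⟨f', g, b⟩, hb, hu⟩ := PA.exists_occursIn_of_occursIn_map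
    (LinearMap.mulLeft k (PA.basis ⟨e, f, a⟩) ∘ₗ
      LinearMap.mulRight k (PA.basis ⟨g', h, c⟩))
    (by simpa [mul_assoc] using hu)
  simp only [LinearMap.comp_apply, LinearMap.mulLeft_apply, LinearMap.mulRight_apply,
    ← mul_assoc] at hu
  obtain rfl : f = f' := by
    by_contra hne
    rw [PA.mul_unmatched _ _ hne, zero_mul] at hu
    exact hu.ne_zero rfl
  obtain rfl : g = g' := by
    by_contra hne
    rw [PA.mul_matched, PA.mul_unmatched _ _ hne] at hu
    exact hu.ne_zero rfl
  rw [PA.basis_mul_basis_mul_basis, PA.occursIn_basis] at hu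
  exact ⟨e, f, g, h, a, b, c, ha, hb, hc, hu⟩

lemma exists_of_occursIn_basis_mul_mul_basis {e f g h : V} (a : Quiver.Path e f)
    (c : Quiver.Path g h) {y : A} {u : PathsIn V}
    (hu : PA.OccursIn u (PA.basis ⟨e, f, a⟩ * y * PA.basis ⟨g, h, c⟩)) :
    ∃ b : Quiver.Path f g, PA.OccursIn ⟨f, g, b⟩ y ∧ u = ⟨e, h, (a.comp b).comp c⟩ := by
  obtain ⟨e', f', g', h', a', b, c', ha, hb, hc, rfl⟩ := exists_of_occursIn_mul_mul hu
  obtain ⟨rfl, rfl, ha⟩ := PathsIn.exists_eq_heq_of_mk_eq (PA.occursIn_basis.1 ha)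
  obtain ⟨rfl, rfl, hc⟩ := PathsIn.exists_eq_heq_of_mk_eq (PA.occursIn_basis.1 hc)
  cases ha
  cases hc
  exact ⟨b, hb, rfl⟩

variable (PA)

lemma repr_basis_mul_mul_basis {e f g h : V} (a : Quiver.Path e f) (c : Quiver.Path g h)
    (y : A) (b : Quiver.Path f g) :
    PA.basis.repr (PA.basis ⟨e, f, a⟩ * y * PA.basis ⟨g, h, c⟩)
      ⟨e, h, (a.comp b).comp c⟩ = PA.basis.repr y ⟨f, g, b⟩ := by
  classical
  let L : A →ₗ[k] k := Finsupp.lapply ⟨e, h, (a.comp b).comp c⟩ ∘ₗ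
    PA.basis.repr.toLinearMap ∘ₗ LinearMap.mulLeft k (PA.basis ⟨e, f, a⟩) ∘ₗ
      LinearMap.mulRight k (PA.basis ⟨g, h, c⟩)
  let R : A →ₗ[k] k := Finsupp.lapply ⟨f, g, b⟩ ∘ₗ PA.basis.repr.toLinearMap
  suffices L = R by simpa [L, R, mul_assoc] using LinearMap.congr_fun this y
  refine PA.basis.ext fun ⟨f', g', b'⟩ => ?_
  simp only [L, R, LinearMap.comp_apply, LinearMap.mulLeft_apply, LinearMap.mulRight_apply,
    Finsupp.lapply_apply, LinearEquiv.coe_coe, ← mul_assoc, Module.Basis.repr_self_apply]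
  by_cases hf : f = f'
  · subst hf
    by_cases hg : g' = g
    · subst hg
      rw [PA.basis_mul_basis_mul_basis, Module.Basis.repr_self_apply]
      simp [comp_inj_left, comp_inj_right]
    · rw [PA.mul_matched, PA.mul_unmatched _ _ hg]
      simp [hg]
  · rw [PA.mul_unmatched _ _ hf, zero_mul]
    simp [Ne.symm hf]

end IsPathAlgebra

section Tips

variable {k : Type} [Field k] {V : Type} [Quiver.{0} V] [Fintype V]
  {A : Type} [Ring A] [Algebra k A] {PA : IsPathAlgebra k V A} {O : AdmissibleOrder V}

lemma isTip_basis (u : PathsIn V) : IsTip PA O (PA.basis u) u :=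
  ⟨PA.occursIn_basis.2 rfl, fun _ hw => PA.occursIn_basis.1 hw ▸ O.refl u⟩

lemma IsTip.unique {z : A} {u u' : PathsIn V} (h : IsTip PA O z u) (h' : IsTip PA O z u') :
    u = u' :=
  O.antisymm _ _ (h'.2 u h.1) (h.2 u' h'.1)

end Tips

section

open scoped Pointwise

lemma ringIdealSpan_eq_coe_span {A : Type} [Ring A] (T : Set A) :
    ringIdealSpan T = (TwoSidedIdeal.span T : Set A) := by
  ext z
  rw [SetLike.mem_coe, TwoSidedIdeal.mem_span_iff_mem_addSubgroup_closure]
  have : {y : A | ∃ r s : A, ∃ t ∈ T, y = r * t * s} = (Set.univ : Set A) * T * Set.univ := by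
    ext y
    simp only [Set.mem_ofPred_eq, Set.mem_mul, Set.mem_univ, true_and]
    constructor
    · rintro ⟨r, s, t, ht, rfl⟩
      exact ⟨_, ⟨r, t, ht, rfl⟩, s, rfl⟩
    · rintro ⟨_, ⟨r, t, ht, rfl⟩, s, rfl⟩
      exact ⟨r, s, t, ht, rfl⟩
  rw [ringIdealSpan, this]
  rfl

end

section MonomialIdeal

variable {k : Type} [Field k] {V : Type} [Quiver.{0} V] [Fintype V]
  {A : Type} [Ring A] [Algebra k A] {PA : IsPathAlgebra k V A}

lemma exists_divides_of_occursIn_of_mem_ringIdealSpan {T : Set A} {z : A}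
    (hz : z ∈ ringIdealSpan T) {u : PathsIn V} (hu : PA.OccursIn u z) :
    ∃ t ∈ T, ∃ v, PA.OccursIn v t ∧ v.Divides u := by
  induction hz using AddSubgroup.closure_induction generalizing u with
  | mem _ hx =>
    obtain ⟨r, s, t, ht, rfl⟩ := hx
    obtain ⟨e, f, g, h, a, b, c, -, hb, -, rfl⟩ := IsPathAlgebra.exists_of_occursIn_mul_mul hu
    exact ⟨t, ht, ⟨f, g, b⟩, hb, e, h, a, c, rfl⟩
  | zero => exact absurd rfl hu.ne_zero
  | add _ _ _ _ hx hy => exact hu.of_add.elim hx hy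
  | neg _ _ hx => exact hx (by simpa [IsPathAlgebra.OccursIn] using hu)

lemma basis_mem_ringIdealSpan_image_iff {P : Set (PathsIn V)} {u : PathsIn V} :
    PA.basis u ∈ ringIdealSpan (PA.basis '' P) ↔ ∃ v ∈ P, v.Divides u := by
  constructor
  · intro hu
    obtain ⟨_, ⟨w, hw, rfl⟩, v, hv, hvu⟩ :=
      exists_divides_of_occursIn_of_mem_ringIdealSpan hu (PA.occursIn_basis.2 rfl)
    exact ⟨w, hw, PA.occursIn_basis.1 hv ▸ hvu⟩
  · rintro ⟨⟨f, g, v⟩, hv, e, h, a, c, rfl⟩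
    rw [← PA.basis_mul_basis_mul_basis]
    exact AddSubgroup.subset_closure ⟨_, _, _, ⟨_, hv, rfl⟩, rfl⟩

end MonomialIdeal

section NormalForm

variable {k : Type} [Field k] {V : Type} [Quiver.{0} V] [Fintype V]
  {A : Type} [Ring A] [Algebra k A] {PA : IsPathAlgebra k V A} {O : AdmissibleOrder V}

lemma mem_span_basis_image_iff {P : Set (PathsIn V)} {z : A} :
    z ∈ Submodule.span k (PA.basis '' P) ↔ ∀ u, PA.OccursIn u z → u ∈ P := by
  rw [Module.Basis.mem_span_image]
  exact ⟨fun h u hu => h (Finsupp.mem_support_iff.2 hu),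
    fun h u hu => h u (Finsupp.mem_support_iff.1 hu)⟩

lemma IsTip.lt_of_occursIn_sub {z y : A} {w : PathsIn V} (hzw : IsTip PA O z w)
    (hy : ∀ u, PA.OccursIn u y → O.le u w) (hc : PA.basis.repr y w = PA.basis.repr z w)
    {u : PathsIn V} (hu : PA.OccursIn u (z - y)) : O.le u w ∧ u ≠ w :=
  ⟨hu.of_sub.elim (hzw.2 u) (hy u), by
    rintro rfl
    exact hu (by simp [hc])⟩

variable (J : TwoSidedIdeal A)

lemma isNormalForm_zero : IsNormalForm PA O J 0 0 :=
  ⟨fun _ hu => absurd rfl hu.ne_zero, by simp⟩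

variable {J}

lemma IsNormalForm.unique {z n₁ n₂ : A} (h₁ : IsNormalForm PA O J z n₁)
    (h₂ : IsNormalForm PA O J z n₂) : n₁ = n₂ := by
  by_contra hne
  obtain ⟨u, hu⟩ := PA.exists_isTip O (sub_ne_zero.2 hne)
  have hJ : n₁ - n₂ ∈ J := by simpa using J.sub_mem h₂.2 h₁.2
  exact hu.1.of_sub.elim (fun h => h₁.1 u h ⟨_, hJ, hu⟩) fun h => h₂.1 u h ⟨_, hJ, hu⟩

lemma IsNormalForm.add_mem {z n y : A} (hn : IsNormalForm PA O J z n) (hy : y ∈ J) :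
    IsNormalForm PA O J (z + y) n :=
  ⟨hn.1, by simpa [add_sub_right_comm] using J.add_mem hn.2 hy⟩

lemma IsNormalForm.add_smul_basis {z n : A} (hn : IsNormalForm PA O J z n) {w : PathsIn V}
    (hw : w ∉ tipSet PA O J) (c : k) :
    IsNormalForm PA O J (z + c • PA.basis w) (n + c • PA.basis w) :=
  ⟨fun u hu => hu.of_add.elim (hn.1 u) fun h => PA.occursIn_basis.1 h.of_smul ▸ hw,
    by simpa using hn.2⟩

lemma exists_reduction_step {P : Set (PathsIn V)}
    (hP : ∀ w ∈ tipSet PA O J, w ∈ P →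
      ∃ h ∈ J, IsTip PA O h w ∧ h ∈ Submodule.span k (PA.basis '' P))
    {z : A} (hz : z ∈ Submodule.span k (PA.basis '' P)) {w : PathsIn V} (hzw : IsTip PA O z w) :
    ∃ z' ∈ Submodule.span k (PA.basis '' P),
      (∀ u, PA.OccursIn u z' → O.le u w ∧ u ≠ w) ∧
      ∀ n ∈ Submodule.span k (PA.basis '' P), IsNormalForm PA O J z' n →
        ∃ n' ∈ Submodule.span k (PA.basis '' P), IsNormalForm PA O J z n' := by
  set S := Submodule.span k (PA.basis '' P)
  have hwP : w ∈ P := mem_span_basis_image_iff.1 hz w hzw.1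
  set c := PA.basis.repr z w
  by_cases hwt : w ∈ tipSet PA O J
  · obtain ⟨h, hJ, hhw, hS⟩ := hP w hwt hwP
    have hd : PA.basis.repr h w ≠ 0 := hhw.1
    refine ⟨z - (c / PA.basis.repr h w) • h, S.sub_mem hz (S.smul_mem _ hS),
      fun u hu => hzw.lt_of_occursIn_sub (fun u hu => hhw.2 u hu.of_smul) ?_ hu,
      fun n hnS hn => ⟨n, hnS, ?_⟩⟩
    · simp [div_mul_cancel₀ _ hd, c]
    · have hcJ : (c / PA.basis.repr h w) • h ∈ J := by
        rw [Algebra.smul_def]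
        exact J.mul_mem_left _ _ hJ
      simpa using hn.add_mem hcJ
  · have hwS : PA.basis w ∈ S := Submodule.subset_span ⟨w, hwP, rfl⟩
    refine ⟨z - c • PA.basis w, S.sub_mem hz (S.smul_mem _ hwS),
      fun u hu => hzw.lt_of_occursIn_sub (fun u hu => PA.occursIn_basis.1 hu.of_smul ▸ O.refl w)
        (by simp [c]) hu,
      fun n hnS hn => ⟨n + c • PA.basis w, S.add_mem hnS (S.smul_mem _ hwS), ?_⟩⟩
    simpa using hn.add_smul_basis hwt c

lemma exists_isNormalForm_mem_span {P : Set (PathsIn V)}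
    (hP : ∀ w ∈ tipSet PA O J, w ∈ P →
      ∃ h ∈ J, IsTip PA O h w ∧ h ∈ Submodule.span k (PA.basis '' P))
    {z : A} (hz : z ∈ Submodule.span k (PA.basis '' P)) :
    ∃ n ∈ Submodule.span k (PA.basis '' P), IsNormalForm PA O J z n := by
  set S := Submodule.span k (PA.basis '' P)
  suffices H : ∀ w z, z ∈ S → IsTip PA O z w → ∃ n ∈ S, IsNormalForm PA O J z n by
    rcases eq_or_ne z 0 with rfl | hz0
    · exact ⟨0, S.zero_mem, isNormalForm_zero J⟩
    · obtain ⟨w, hw⟩ := PA.exists_isTip O hz0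
      exact H w z hz hw
  intro w
  induction w using O.wf.induction with
  | _ w ih =>
    intro z hz hzw
    obtain ⟨z', hz'S, hz'lt, hlift⟩ := exists_reduction_step hP hz hzw
    rcases eq_or_ne z' 0 with rfl | hz'0
    · exact hlift 0 S.zero_mem (isNormalForm_zero J)
    · obtain ⟨w', hw'⟩ := PA.exists_isTip O hz'0
      obtain ⟨n, hnS, hn⟩ := ih w' (hz'lt w' hw'.1) z' hz'S hw'
      exact hlift n hnS hn

lemma exists_isNormalForm (z : A) : ∃ n, IsNormalForm PA O J z n := by
  obtain ⟨n, -, hn⟩ := exists_isNormalForm_mem_span (PA := PA) (O := O) (J := J) (P := Set.univ)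
    (fun _ ⟨h, hJ, hhw⟩ _ => ⟨h, hJ, hhw, by simp⟩) (z := z) (by simp)
  exact ⟨n, hn⟩

end NormalForm

section Groebner

variable {k : Type} [Field k] {V : Type} [Quiver.{0} V] [Fintype V]
  {A : Type} [Ring A] [Algebra k A] {PA : IsPathAlgebra k V A} {O : AdmissibleOrder V}
  {I G : Set A}

lemma IsGroebnerBasis.exists_isTip_divides (hGB : IsGroebnerBasis PA O I G) {u : PathsIn V}
    (hu : u ∈ tipSet PA O I) : ∃ g ∈ G, ∃ t, IsTip PA O g t ∧ t.Divides u := by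
  obtain ⟨z, hz, hzu⟩ := hu
  obtain ⟨g, hg, t, u', ht, hu', htu⟩ := hGB.2 z hz hzu.1.ne_zero
  exact ⟨g, hg, t, ht, hu'.unique hzu ▸ htu⟩

lemma exists_mem_minTips_divides {u : PathsIn V} (hu : u ∈ tipSet PA O I) :
    ∃ t ∈ minTips PA O I, t.Divides u := by
  induction h : u.len using Nat.strong_induction_on generalizing u with
  | _ n ih =>
    by_cases hmin : u ∈ minTips PA O I
    · exact ⟨u, hmin, .refl u⟩
    · obtain ⟨u', hu', hmem⟩ : ∃ u', u'.ProperlyDivides u ∧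
          PA.basis u' ∈ ringIdealSpan (PA.basis '' tipSet PA O I) := by
        simpa [minTips, hu] using hmin
      obtain ⟨v, hv, hvu'⟩ := basis_mem_ringIdealSpan_image_iff.1 hmem
      obtain ⟨t, ht, htv⟩ := ih v.len (h ▸ hvu'.len_le.trans_lt hu'.len_lt) hv rfl
      exact ⟨t, ht, htv.trans (hvu'.trans hu'.1)⟩

lemma IsGroebnerBasis.exists_isTip_of_mem_minTips (hGB : IsGroebnerBasis PA O I G)
    {t : PathsIn V} (ht : t ∈ minTips PA O I) : ∃ g ∈ G, IsTip PA O g t := by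
  obtain ⟨g, hg, t', ht', hdvd⟩ := hGB.exists_isTip_divides ht.1
  rcases eq_or_ne t' t with rfl | hne
  · exact ⟨g, hg, ht'⟩
  · exact (ht.2 t' ⟨hdvd, hne⟩
      (basis_mem_ringIdealSpan_image_iff.2 ⟨t', ⟨g, hGB.1 hg, ht'⟩, .refl t'⟩)).elim

lemma isTip_basis_sub_of_isNormalForm {t : PathsIn V} (ht : t ∈ tipSet PA O I) {n : A}
    (hn : IsNormalForm PA O I (PA.basis t) n) : IsTip PA O (PA.basis t - n) t := by
  have hnt : PA.basis.repr n t = 0 := not_not.1 fun h => hn.1 t h ht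
  have hocc : PA.OccursIn t (PA.basis t - n) := by simp [IsPathAlgebra.OccursIn, hnt]
  obtain ⟨m, hm⟩ := PA.exists_isTip O hocc.ne_zero
  obtain rfl : m = t :=
    hm.1.of_sub.elim PA.occursIn_basis.1 fun h => absurd ⟨_, hn.2, hm⟩ (hn.1 m h)
  exact hm

lemma IsGroebnerBasis.exists_isTip_of_mem_reducedGB (hGB : IsGroebnerBasis PA O I G)
    {x : A} (hx : x ∈ reducedGB PA O I) {u : PathsIn V} (hu : IsTip PA O x u) :
    ∃ g ∈ G, IsTip PA O g u := by
  obtain ⟨t, ht, n, hn, rfl⟩ := hx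
  obtain rfl := (isTip_basis_sub_of_isNormalForm ht.1 hn).unique hu
  exact hGB.exists_isTip_of_mem_minTips ht

lemma isGroebnerBasis_reducedGB (J : TwoSidedIdeal A) :
    IsGroebnerBasis PA O J (reducedGB PA O J) := by
  refine ⟨fun x ⟨t, _, n, hn, hx⟩ => hx ▸ hn.2, fun z hz hz0 => ?_⟩
  obtain ⟨u, hu⟩ := PA.exists_isTip O hz0
  obtain ⟨t, ht, htu⟩ := exists_mem_minTips_divides ⟨z, hz, hu⟩
  obtain ⟨n, hn⟩ := exists_isNormalForm (PA := PA) (O := O) (J := J) (PA.basis t)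
  exact ⟨_, ⟨t, ht, n, hn, rfl⟩, t, u, isTip_basis_sub_of_isNormalForm ht.1 hn, hu, htu⟩

end Groebner

namespace IsStrictMonomialGB

variable {k : Type} [Field k] {V : Type} [Quiver.{0} V] [Fintype V]
  {A : Type} [Ring A] [Algebra k A] {PA : IsPathAlgebra k V A} {O : AdmissibleOrder V}
  {I G : Set A} {va vb xp yq : V} {α : va ⟶ vb} {p : Quiver.Path xp va}
  {q : Quiver.Path vb yq}

lemma eq_basis_pathPAQ_of_isTip (hG : IsStrictMonomialGB PA O α I G p q) {g : A} (hg : g ∈ G)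
    {t : PathsIn V} (ht : IsTip PA O g t) (htα : ¬AvoidsArrow α t) :
    g = PA.basis (pathPAQ α p q) :=
  by_contra fun hne => htα (hG.others_avoid g hg hne t ht.1)

lemma elemAvoids_of_isTip (hG : IsStrictMonomialGB PA O α I G p q) {g : A} (hg : g ∈ G)
    {t : PathsIn V} (ht : IsTip PA O g t) (htα : AvoidsArrow α t) : PA.ElemAvoids α g := by
  refine hG.others_avoid g hg fun hg' => htα ?_
  subst hg'
  exact (isTip_basis _).unique ht ▸ arrowPath_divides_pathPAQ p q

lemma pathPAQ_mem_tipSet (hG : IsStrictMonomialGB PA O α I G p q) :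
    pathPAQ α p q ∈ tipSet PA O I :=
  ⟨_, hG.gb.1 hG.mem, isTip_basis _⟩

lemma eq_pathPAQ_of_divides (hG : IsStrictMonomialGB PA O α I G p q) {u : PathsIn V}
    (hu : u ∈ tipSet PA O I) (hdvd : u.Divides (pathPAQ α p q)) : u = pathPAQ α p q := by
  obtain ⟨g, hg, t, ht, htu⟩ := hG.gb.exists_isTip_divides hu
  rcases divides_pathPAQ (htu.trans hdvd) with hα | hp | hq
  · obtain rfl := hG.eq_basis_pathPAQ_of_isTip hg ht (not_not.2 hα)
    obtain rfl := (isTip_basis _).unique ht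
    exact hdvd.antisymm htu
  · exact absurd hp (hG.tips_no_divide g hg t ht).1
  · exact absurd hq (hG.tips_no_divide g hg t ht).2

lemma pathPAQ_mem_minTips (hG : IsStrictMonomialGB PA O α I G p q) :
    pathPAQ α p q ∈ minTips PA O I := by
  refine ⟨hG.pathPAQ_mem_tipSet, fun u hu hmem => ?_⟩
  obtain ⟨v, hv, hvu⟩ := basis_mem_ringIdealSpan_image_iff.1 hmem
  have hv' := hG.eq_pathPAQ_of_divides hv (hvu.trans hu.1)
  exact absurd (hv' ▸ hvu.len_le) (not_le.2 hu.len_lt)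

lemma pathPAQ_eq {xp' yq' : V} {p' : Quiver.Path xp' va} {q' : Quiver.Path vb yq'} {G' : Set A}
    (hG : IsStrictMonomialGB PA O α I G p q) (hG' : IsStrictMonomialGB PA O α I G' p' q') :
    pathPAQ α p q = pathPAQ α p' q' := by
  obtain ⟨g', hg', t', ht', hdvd⟩ := hG'.gb.exists_isTip_divides hG.pathPAQ_mem_tipSet
  obtain rfl := hG.eq_pathPAQ_of_divides ⟨g', hG'.gb.1 hg', ht'⟩ hdvd
  obtain rfl := hG'.eq_basis_pathPAQ_of_isTip hg' ht' (not_not.2 (arrowPath_divides_pathPAQ p q))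
  exact ((isTip_basis _).unique ht').symm

variable {J : TwoSidedIdeal A}

lemma exists_elemAvoids_isTip (hG : IsStrictMonomialGB PA O α J G p q) {w : PathsIn V}
    (hw : w ∈ tipSet PA O J) (hwα : AvoidsArrow α w) :
    ∃ h ∈ J, IsTip PA O h w ∧ PA.ElemAvoids α h := by
  obtain ⟨g, hg, ⟨f, f', t⟩, ht, a, d, r, s, rfl⟩ := hG.gb.exists_isTip_divides hw
  dsimp only at r s
  obtain ⟨⟨hr, htα⟩, hs⟩ := avoidsArrow_comp_iff.1 hwα |>.imp_left avoidsArrow_comp_iff.1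
  have hgα := hG.elemAvoids_of_isTip hg ht htα
  refine ⟨PA.basis ⟨a, f, r⟩ * g * PA.basis ⟨f', d, s⟩,
    J.mul_mem_right _ _ (J.mul_mem_left _ _ (hG.gb.1 hg)),
    ⟨?_, fun u hu => ?_⟩, fun u hu => ?_⟩
  · rw [IsPathAlgebra.OccursIn, PA.repr_basis_mul_mul_basis]
    exact ht.1
  · obtain ⟨b, hb, rfl⟩ := IsPathAlgebra.exists_of_occursIn_basis_mul_mul_basis r s hu
    exact O.le_comp_comp (ht.2 _ hb) r s
  · obtain ⟨b, hb, rfl⟩ := IsPathAlgebra.exists_of_occursIn_basis_mul_mul_basis r s hu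
    exact avoidsArrow_comp_iff.2 ⟨avoidsArrow_comp_iff.2 ⟨hr, hgα _ hb⟩, hs⟩

lemma exists_isNormalForm_elemAvoids (hG : IsStrictMonomialGB PA O α J G p q) {z : A}
    (hz : PA.ElemAvoids α z) : ∃ n, PA.ElemAvoids α n ∧ IsNormalForm PA O J z n := by
  have hspan {y : A} : PA.ElemAvoids α y ↔
      y ∈ Submodule.span k (PA.basis '' {u | AvoidsArrow α u}) :=
    mem_span_basis_image_iff.symm
  obtain ⟨n, hn, hnf⟩ := exists_isNormalForm_mem_span (fun w hw hwα => by
    obtain ⟨h, hJ, hhw, hhα⟩ := hG.exists_elemAvoids_isTip hw hwα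
    exact ⟨h, hJ, hhw, hspan.1 hhα⟩) (hspan.1 hz)
  exact ⟨n, hspan.2 hn, hnf⟩

lemma reducedGB (hG : IsStrictMonomialGB PA O α J G p q) :
    IsStrictMonomialGB PA O α J (reducedGB PA O J) p q := by
  have hnf₀ : IsNormalForm PA O J (PA.basis (pathPAQ α p q)) 0 :=
    ⟨fun _ hu => absurd rfl hu.ne_zero, by simpa using hG.gb.1 hG.mem⟩
  refine ⟨isGroebnerBasis_reducedGB J, hG.p_avoids, hG.q_avoids, hG.not_both_trivial,
    ⟨_, hG.pathPAQ_mem_minTips, 0, hnf₀, (sub_zero _).symm⟩, ?_,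
    fun x hx u hu => ?_, fun x hx u hu => ?_, fun x hx u hu => ?_⟩
  · rintro _ ⟨t, ht, n, hn, rfl⟩ hne
    obtain ⟨g, hg, hgt⟩ := hG.gb.exists_isTip_of_mem_minTips ht
    have htα : AvoidsArrow α t := by
      intro htα
      obtain rfl := hG.eq_basis_pathPAQ_of_isTip hg hgt (not_not.2 htα)
      obtain rfl := (isTip_basis _).unique hgt
      exact hne (by rw [hn.unique hnf₀, sub_zero])
    obtain ⟨n', hn'α, hn'⟩ := hG.exists_isNormalForm_elemAvoids
      (fun u hu => PA.occursIn_basis.1 hu ▸ htα)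
    obtain rfl := hn.unique hn'
    exact fun u hu => hu.of_sub.elim (fun h => PA.occursIn_basis.1 h ▸ htα) (hn'α u)
  all_goals obtain ⟨g, hg, hgu⟩ := hG.gb.exists_isTip_of_mem_reducedGB hx hu
  · exact hG.tips_no_overlap_p g hg u hgu
  · exact hG.tips_no_overlap_q g hg u hgu
  · exact hG.tips_no_divide g hg u hgu

end IsStrictMonomialGB

/-- let `I` be an admissible ideal of `kQ`, `α` an arrow, and fix an admissible
order on the set of paths of `Q`.  Then `I` possesses a strict `α`-monomial Gröbner basis
if and only if the reduced Gröbner basis of `I` is strict `α`-monomial.  In particular, if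
`𝒢_{p,q}` and `𝒢'_{p',q'}` are two strict `α`-monomial Gröbner bases for `I`, then
`p' = p` and `q' = q`. -/
theorem strict_monomial_GB_iff_reduced_and_unique
    {k : Type} [Field k] {V : Type} [Quiver.{0} V] [Fintype V]
    [∀ a b : V, Fintype (a ⟶ b)]
    {A : Type} [Ring A] [Algebra k A] (PA : IsPathAlgebra k V A)
    (I : Set A) (hI : IsAdmissibleIdeal PA I)
    (O : AdmissibleOrder V) {va vb : V} (α : va ⟶ vb) :
    ((∃ (xp yq : V) (p : Quiver.Path xp va) (q : Quiver.Path vb yq) (G : Set A),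
        IsStrictMonomialGB PA O α I G p q) ↔
      (∃ (xp yq : V) (p : Quiver.Path xp va) (q : Quiver.Path vb yq),
        IsStrictMonomialGB PA O α I (reducedGB PA O I) p q)) ∧
    (∀ (xp yq xp' yq' : V) (p : Quiver.Path xp va) (q : Quiver.Path vb yq)
        (p' : Quiver.Path xp' va) (q' : Quiver.Path vb yq') (G G' : Set A),
      IsStrictMonomialGB PA O α I G p q → IsStrictMonomialGB PA O α I G' p' q' →
        (⟨xp, va, p⟩ : PathsIn V) = ⟨xp', va, p'⟩ ∧
        (⟨vb, yq, q⟩ : PathsIn V) = ⟨vb, yq', q'⟩) := by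
  obtain ⟨J, rfl⟩ : ∃ J : TwoSidedIdeal A, (J : Set A) = I :=
    ⟨_, (hI.1.trans (ringIdealSpan_eq_coe_span I)).symm⟩
  refine ⟨⟨fun ⟨xp, yq, p, q, _, hG⟩ => ⟨xp, yq, p, q, hG.reducedGB⟩,
    fun ⟨xp, yq, p, q, hG⟩ => ⟨xp, yq, p, q, _, hG⟩⟩, ?_⟩
  intro _ _ _ _ _ _ _ _ _ _ hG hG'
  exact pathPAQ_injective hG.q_avoids hG'.q_avoids (hG.pathPAQ_eq hG')
end

section
/- Let I be an admissible ideal of kQ and α an arrow of Q. If I possesses a strict α-monomial Gröbner basis (with respect to some admissible order on the set of paths of Q), then α is not a loop. Consequently, if α is a loop, then Λ/⟨ᾱ⟩ is never a strict monomial arrow removal of Λ = kQ/I. -/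
/-! Scaffolding: path algebras of quivers, admissible ideals, monomial arrow removal,
admissible orders and Gröbner bases, following Green. -/

open Quiver

/-! If `α` is a loop, admissibility puts a power `αᴺ` into `I`. Every path of positive length
dividing `αᴺ` contains `α`, so the element of `𝒢` (resp. of `T`) responsible for `αᴺ ∈ I` cannot
avoid `α` and must be `pαq` itself, with `pαq` dividing `αᴺ`. But then the non-trivial one among
`p` and `q` divides `αᴺ` as well, hence contains `α`, which it avoids. -/

namespace PathsIn

variable {V : Type} [Quiver.{0} V]

theorem Divides.trans_s6 {u v w : PathsIn V} (huv : u.Divides v) (hvw : v.Divides w) :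
    u.Divides w := by
  obtain ⟨a, d, r, s, rfl⟩ := huv
  obtain ⟨a', d', r', s', rfl⟩ := hvw
  exact ⟨a', d', r'.comp r, s.comp s', by simp only [Quiver.Path.comp_assoc]⟩

theorem left_divides_pathPAQ {va vb xp yq : V} (α : va ⟶ vb) (p : Quiver.Path xp va)
    (q : Quiver.Path vb yq) : PathsIn.Divides ⟨xp, va, p⟩ (pathPAQ α p q) :=
  ⟨xp, yq, .nil, α.toPath.comp q, by simp only [pathPAQ, Quiver.Path.nil_comp,
    Quiver.Path.comp_assoc]⟩

theorem right_divides_pathPAQ {va vb xp yq : V} (α : va ⟶ vb) (p : Quiver.Path xp va)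
    (q : Quiver.Path vb yq) : PathsIn.Divides ⟨vb, yq, q⟩ (pathPAQ α p q) :=
  ⟨xp, yq, p.comp α.toPath, .nil, by simp only [pathPAQ, Quiver.Path.comp_nil]⟩

end PathsIn

section LoopPow

variable {V : Type} [Quiver.{0} V] {a : V}

def loopPow (α : a ⟶ a) : ℕ → Quiver.Path a a
  | 0 => .nil
  | n + 1 => (loopPow α n).cons α

theorem length_loopPow (α : a ⟶ a) (n : ℕ) : (loopPow α n).length = n := by
  induction n with
  | zero => rfl
  | succ n ih => simp only [loopPow, Quiver.Path.length_cons, ih]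

theorem arrowPath_divides_of_comp_comp_eq_loopPow (α : a ⟶ a) (n : ℕ) {x y : V}
    (r : Quiver.Path a x) (m : Quiver.Path x y) (s : Quiver.Path y a)
    (h : (r.comp m).comp s = loopPow α n) (hm : 0 < m.length) :
    (arrowPath α).Divides ⟨x, y, m⟩ := by
  induction n generalizing y with
  | zero =>
    have := congrArg Quiver.Path.length h
    simp only [Quiver.Path.length_comp, loopPow, Quiver.Path.length_nil] at this
    omega
  | succ n ih =>
    cases s with
    | cons s e =>
      obtain rfl := Quiver.Path.obj_eq_of_cons_eq_cons h
      exact ih m s (eq_of_heq (Quiver.Path.heq_of_cons_eq_cons h)) hm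
    | nil =>
      cases m with
      | nil => exact absurd hm (lt_irrefl 0)
      | cons m e =>
        rw [Quiver.Path.comp_nil, Quiver.Path.comp_cons] at h
        obtain rfl := Quiver.Path.obj_eq_of_cons_eq_cons h
        obtain rfl : e = α := eq_of_heq (Quiver.Path.hom_heq_of_cons_eq_cons h)
        exact ⟨_, _, m, .nil, rfl⟩

theorem arrowPath_divides_of_divides_loopPow (α : a ⟶ a) {n : ℕ} {u : PathsIn V}
    (hu : u.Divides ⟨a, a, loopPow α n⟩) (hlen : 0 < u.len) : (arrowPath α).Divides u := by
  obtain ⟨x, d, r, s, h⟩ := hu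
  obtain ⟨rfl, h⟩ := Sigma.mk.inj_iff.mp h
  obtain ⟨rfl, h⟩ := Sigma.mk.inj_iff.mp (eq_of_heq h)
  exact arrowPath_divides_of_comp_comp_eq_loopPow α n r u.2.2 s (eq_of_heq h).symm hlen

theorem not_pathPAQ_divides_loopPow (α : a ⟶ a) {xp yq : V} {p : Quiver.Path xp a}
    {q : Quiver.Path a yq} (hp : AvoidsArrow α ⟨xp, a, p⟩) (hq : AvoidsArrow α ⟨a, yq, q⟩)
    (hpq : 0 < p.length ∨ 0 < q.length) (n : ℕ) :
    ¬ (pathPAQ α p q).Divides ⟨a, a, loopPow α n⟩ := fun hdiv =>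
  hpq.elim
    (fun hp' => hp (arrowPath_divides_of_divides_loopPow α
      ((PathsIn.left_divides_pathPAQ α p q).trans_s6 hdiv) hp'))
    (fun hq' => hq (arrowPath_divides_of_divides_loopPow α
      ((PathsIn.right_divides_pathPAQ α p q).trans_s6 hdiv) hq'))

end LoopPow

namespace IsPathAlgebra

variable {k : Type} [Field k] {V : Type} [Quiver.{0} V] [Fintype V]
  {A : Type} [Ring A] [Algebra k A] (PA : IsPathAlgebra k V A)

theorem occursIn_basis_iff {u w : PathsIn V} : PA.OccursIn u (PA.basis w) ↔ u = w := by
  simp only [OccursIn, Module.Basis.repr_self, Finsupp.single_apply_ne_zero, ne_eq, one_ne_zero,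
    not_false_eq_true, and_true]

theorem occursIn_of_occursIn_smul {u : PathsIn V} {c : k} {z : A}
    (h : PA.OccursIn u (c • z)) : PA.OccursIn u z :=
  fun hz => h (by rw [map_smul, Finsupp.smul_apply, hz, smul_zero])

theorem exists_occursIn_of_occursIn_sum {u : PathsIn V} {ι : Type*} {s : Finset ι} {f : ι → A}
    (h : PA.OccursIn u (∑ i ∈ s, f i)) : ∃ i ∈ s, PA.OccursIn u (f i) := by
  rw [OccursIn, map_sum, Finsupp.finsetSum_apply] at h
  exact Finset.exists_ne_zero_of_sum_ne_zero h

theorem exists_occursIn_of_occursIn_mul {u : PathsIn V} {x y : A} (h : PA.OccursIn u (x * y)) :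
    ∃ w v, PA.OccursIn w x ∧ PA.OccursIn v y ∧ PA.OccursIn u (PA.basis w * PA.basis v) := by
  rw [← PA.basis.linearCombination_repr x, ← PA.basis.linearCombination_repr y,
    Finsupp.linearCombination_apply, Finsupp.linearCombination_apply, Finsupp.sum,
    Finsupp.sum, Finset.sum_mul_sum] at h
  obtain ⟨w, hw, h⟩ := PA.exists_occursIn_of_occursIn_sum h
  obtain ⟨v, hv, h⟩ := PA.exists_occursIn_of_occursIn_sum h
  rw [smul_mul_smul_comm] at h
  exact ⟨w, v, Finsupp.mem_support_iff.mp hw, Finsupp.mem_support_iff.mp hv,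
    PA.occursIn_of_occursIn_smul h⟩

theorem divides_of_occursIn_basis_mul_basis {u w v : PathsIn V}
    (h : PA.OccursIn u (PA.basis w * PA.basis v)) : w.Divides u ∧ v.Divides u := by
  obtain ⟨a, b, pw⟩ := w
  obtain ⟨b', c, pv⟩ := v
  by_cases hb : b = b'
  · subst hb
    rw [PA.mul_matched, occursIn_basis_iff] at h
    subst h
    exact ⟨⟨a, c, .nil, pv, by rw [Quiver.Path.nil_comp]⟩, ⟨a, c, pw, .nil, rfl⟩⟩
  · rw [PA.mul_unmatched pw pv hb] at h
    exact absurd (by rw [map_zero, Finsupp.zero_apply]) h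

theorem exists_occursIn_of_mem_closure {S : Set A} {z : A}
    (hz : z ∈ AddSubgroup.closure S) {u : PathsIn V} (hu : PA.OccursIn u z) :
    ∃ y ∈ S, PA.OccursIn u y := by
  by_contra! hS
  let coeff : A →+ k := (Finsupp.lapply u ∘ₗ PA.basis.repr.toLinearMap).toAddMonoidHom
  have hker : S ⊆ coeff.ker := fun y hy => by simpa [coeff, OccursIn] using hS y hy
  exact hu ((AddSubgroup.closure_le _).mpr hker hz)

theorem exists_occursIn_divides_of_mem_ringIdealSpan {T : Set A} {z : A}
    (hz : z ∈ ringIdealSpan T) {u : PathsIn V} (hu : PA.OccursIn u z) :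
    ∃ t ∈ T, ∃ v, PA.OccursIn v t ∧ v.Divides u := by
  obtain ⟨_, ⟨r, s, t, ht, rfl⟩, hu⟩ := PA.exists_occursIn_of_mem_closure hz hu
  obtain ⟨w, s', hw, -, hws'⟩ := PA.exists_occursIn_of_occursIn_mul hu
  obtain ⟨r', v, -, hv, hr'v⟩ := PA.exists_occursIn_of_occursIn_mul hw
  exact ⟨t, ht, v, hv, (PA.divides_of_occursIn_basis_mul_basis hr'v).2.trans_s6
    (PA.divides_of_occursIn_basis_mul_basis hws').1⟩

theorem not_divides_loopPow_of_occursIn {a xp yq : V} (α : a ⟶ a) {p : Quiver.Path xp a}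
    {q : Quiver.Path a yq} (hp : AvoidsArrow α ⟨xp, a, p⟩) (hq : AvoidsArrow α ⟨a, yq, q⟩)
    (hpq : 0 < p.length ∨ 0 < q.length) {t : A}
    (ht : t ≠ PA.basis (pathPAQ α p q) → PA.ElemAvoids α t) {v : PathsIn V}
    (hv : PA.OccursIn v t) (hlen : 0 < v.len) (n : ℕ) :
    ¬ v.Divides ⟨a, a, loopPow α n⟩ := by
  intro hdiv
  obtain rfl : t = PA.basis (pathPAQ α p q) := by_contra fun hne =>
    ht hne v hv (arrowPath_divides_of_divides_loopPow α hdiv hlen)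
  rw [PA.occursIn_basis_iff] at hv
  exact not_pathPAQ_divides_loopPow α hp hq hpq n (hv ▸ hdiv)

end IsPathAlgebra

/-- if the admissible ideal `I` of `kQ` possesses a strict `α`-monomial Gröbner
basis with respect to some admissible order, then `α` is not a loop.  Consequently, if `α`
is a loop, then `Λ/⟨ᾱ⟩` is never a strict monomial arrow removal of `Λ = kQ/I` (i.e. `I`
possesses no strict `α`-monomial generating set). -/
theorem not_loop_of_strict_monomial
    {k : Type} [Field k] {V : Type} [Quiver.{0} V] [Fintype V]
    [∀ a b : V, Fintype (a ⟶ b)]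
    {A : Type} [Ring A] [Algebra k A] (PA : IsPathAlgebra k V A)
    (I : Set A) (hI : IsAdmissibleIdeal PA I)
    {va vb : V} (α : va ⟶ vb) :
    ((∃ (O : AdmissibleOrder V) (xp yq : V) (p : Quiver.Path xp va)
        (q : Quiver.Path vb yq) (G : Set A), IsStrictMonomialGB PA O α I G p q) →
      va ≠ vb) ∧
    (va = vb → ∀ (xp yq : V) (p : Quiver.Path xp va) (q : Quiver.Path vb yq)
      (T : Set A), ¬ IsStrictMonomialGenSet PA α I T p q) := by
  obtain ⟨-, ⟨N, hN⟩, hI₂⟩ := hI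
  constructor
  · rintro ⟨O, xp, yq, p, q, G, hG⟩ rfl
    have hpow : PA.basis ⟨va, va, loopPow α N⟩ ∈ I := hN _ (length_loopPow α N).ge
    obtain ⟨g, hg, tg, tz, htg, htz, hdiv⟩ := hG.gb.2 _ hpow (PA.basis.ne_zero _)
    obtain rfl := PA.occursIn_basis_iff.mp htz.1
    exact PA.not_divides_loopPow_of_occursIn α hG.p_avoids hG.q_avoids hG.not_both_trivial
      (hG.others_avoid g hg) htg.1 (two_pos.trans_le (hI₂ g (hG.gb.1 hg) tg htg.1)) N hdiv
  · rintro rfl xp yq p q T hT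
    have hpow : PA.basis ⟨va, va, loopPow α N⟩ ∈ ringIdealSpan T :=
      hT.data.gen ▸ hN _ (length_loopPow α N).ge
    obtain ⟨t, ht, v, hv, hdiv⟩ :=
      PA.exists_occursIn_divides_of_mem_ringIdealSpan hpow (PA.occursIn_basis_iff.mpr rfl)
    exact PA.not_divides_loopPow_of_occursIn α hT.data.p_avoids hT.data.q_avoids
      hT.data.not_both_trivial (hT.others_avoid t ht) hv
      (two_pos.trans_le ((hT.data.rels t ht).1 v hv)) N hdiv
end
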